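/- arXiv:2208.06126 — 2 statements merged into one kernel-verified Lean document; each statement's English description precedes it below -/
import Mathlib

section
/- Let T be a tree on k ≥ 4 vertices that is not a path, and for a vertex v of T let m_T(v) be the number of vertices of a largest connected component of T − v; set m(T) = min over vertices v of m_T(v). Then for every n ≥ k, ex_c(n,T) ≥ n − 1 + ⌊(n−1)/(m(T)−1)⌋ · C(m(T)−1, 2), where C(m,2) denotes the binomial coefficient m choose 2. -/
open SimpleGraph

/-- `G` contains a copy of `F`, i.e. a subgraph isomorphic to `F`
(given by an injective graph homomorphism). -/
def ContainsCopy {α β : Type*} (F : SimpleGraph α) (G : SimpleGraph β) : Prop :=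
  ∃ f : α ↪ β, ∀ ⦃a b : α⦄, F.Adj a b → G.Adj (f a) (f b)

/-- The connected Turán number `ex_c(n, F)`: the maximum number of edges of a
connected `F`-free simple graph on `n` vertices. -/
noncomputable def exConn {α : Type*} (n : ℕ) (F : SimpleGraph α) : ℕ :=
  sSup {m | ∃ G : SimpleGraph (Fin n), G.Connected ∧ ¬ ContainsCopy F G ∧ m = G.edgeSet.ncard}

/-- `G` is a path graph: it has a Hamiltonian path and no other edges.
(For trees, having a Hamiltonian path is equivalent to being a path.) -/
def IsPathGraph {V : Type*} (G : SimpleGraph V) : Prop :=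
  ∃ (u v : V) (p : G.Walk u v), p.IsPath ∧ ∀ w, w ∈ p.support

/-- `m_T(v)`: the number of vertices of a largest connected component of `T - v`. -/
noncomputable def largestCompDelVert {V : Type*} (T : SimpleGraph V) (v : V) : ℕ :=
  sSup {m | ∃ c : (T.induce {u | u ≠ v}).ConnectedComponent, m = c.supp.ncard}

/-- `m(T) = min_{v ∈ V(T)} m_T(v)`. -/
noncomputable def branchingNumber {V : Type*} (T : SimpleGraph V) : ℕ :=
  sInf (Set.range fun v => largestCompDelVert T v)

/-!
Write `m = m(T)`. If `m ≥ 2`, join a centre to all other `n - 1` vertices and split those into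
cliques ("blades") of `m - 1` vertices, `⌊(n - 1)/(m - 1)⌋` of them full; this windmill is
connected and has the required number of edges by the handshake lemma. A copy of `T` in it either
avoids the centre, and then lies in one blade although `|T| > m - 1`, or maps some `v` to the
centre, and then every component of `T - v` lies in one blade, so `m_T(v) ≤ m - 1 < m`.
If `m ≤ 1`, the bound is `n - 1` (as `(n - 1) / 0 = 0`), `T` is a star with at least three leaves,
and the path `P_n` works.
-/

lemma ncard_edgeSet_le_exConn {α : Type*} {n : ℕ} {F : SimpleGraph α} {G : SimpleGraph (Fin n)}
    (hG : G.Connected) (hF : ¬ ContainsCopy F G) : G.edgeSet.ncard ≤ exConn n F := by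
  refine le_csSup ⟨Nat.card (Sym2 (Fin n)), ?_⟩ ⟨G, hG, hF, rfl⟩
  rintro _ ⟨H, -, -, rfl⟩
  exact Set.ncard_le_card _

lemma le_exConn_of_connected {α : Type*} {N : ℕ} {F : SimpleGraph α}
    {G : SimpleGraph (Fin (N + 1))} (hG : G.Connected) (hF : ¬ ContainsCopy F G) :
    N ≤ exConn (N + 1) F := by
  have := hG.card_vert_le_card_edgeSet_add_one
  rw [Nat.card_fin, Nat.card_coe_set_eq] at this
  exact (ncard_edgeSet_le_exConn hG hF).trans' (by omega)

section BranchingNumber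

variable {V : Type*} {T : SimpleGraph V} {v : V}

lemma largestCompDelVert_le {b : ℕ}
    (h : ∀ C : (T.induce {u | u ≠ v}).ConnectedComponent, C.supp.ncard ≤ b) :
    largestCompDelVert T v ≤ b :=
  csSup_le' <| by rintro _ ⟨C, rfl⟩; exact h C

lemma ncard_supp_le_largestCompDelVert [Finite V]
    (C : (T.induce {u | u ≠ v}).ConnectedComponent) :
    C.supp.ncard ≤ largestCompDelVert T v :=
  le_csSup ⟨Nat.card V, fun _ ⟨_, hC⟩ =>
    hC ▸ (Set.ncard_le_card _).trans (Finite.card_subtype_le _)⟩ ⟨C, rfl⟩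

lemma largestCompDelVert_le_card_sub_one [Finite V] (v : V) :
    largestCompDelVert T v ≤ Nat.card V - 1 := by
  refine largestCompDelVert_le fun C => (Set.ncard_le_card _).trans_eq ?_
  rw [Nat.card_coe_set_eq]
  exact (Set.ncard_compl {v}).trans (by rw [Set.ncard_singleton])

lemma adj_of_largestCompDelVert_le_one [Finite V] (hT : T.Preconnected)
    (hv : largestCompDelVert T v ≤ 1) {u : V} (hu : u ≠ v) : T.Adj v u := by
  obtain ⟨_ | @⟨_, w, _, huw, -⟩⟩ := hT u v
  · exact absurd rfl hu
  by_cases hw : w = v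
  · exact hw ▸ huw.symm
  let C := (T.induce {u | u ≠ v}).connectedComponentMk ⟨u, hu⟩
  have hsub : {⟨u, hu⟩, ⟨w, hw⟩} ⊆ C.supp := by
    rintro x (rfl | rfl)
    · rfl
    · exact ConnectedComponent.sound (Adj.reachable (by simpa using huw.symm))
  have := (Set.ncard_le_ncard hsub).trans (ncard_supp_le_largestCompDelVert C)
  rw [Set.ncard_pair (by simpa using huw.ne)] at this
  omega

end BranchingNumber

def windmill {W ι : Type*} (c : W) (p : W → ι) : SimpleGraph W where
  Adj u v := u ≠ v ∧ (u = c ∨ v = c ∨ p u = p v)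
  symm := ⟨fun _ _ h => ⟨h.1.symm, by tauto⟩⟩
  loopless := ⟨fun _ h => h.1 rfl⟩

namespace windmill

variable {W ι : Type*} {c : W} {p : W → ι}

instance [DecidableEq W] [DecidableEq ι] : DecidableRel (windmill c p).Adj :=
  fun _ _ => inferInstanceAs (Decidable (_ ∧ _))

lemma adj_iff {u v : W} : (windmill c p).Adj u v ↔ u ≠ v ∧ (u = c ∨ v = c ∨ p u = p v) :=
  Iff.rfl

lemma reachable_center (u : W) : (windmill c p).Reachable u c := by
  by_cases hu : u = c
  · exact hu ▸ Reachable.refl _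
  · exact Adj.reachable ⟨hu, Or.inr (Or.inl rfl)⟩

lemma connected : (windmill c p).Connected :=
  { preconnected := fun u v => (reachable_center u).trans (reachable_center v).symm
    nonempty := ⟨c⟩ }

lemma label_eq_of_reachable {U : Type*} {H : SimpleGraph U} (φ : H →g windmill c p)
    (hc : ∀ x, φ x ≠ c) {x y : U} (h : H.Reachable x y) : p (φ x) = p (φ y) := by
  obtain ⟨w⟩ := h
  induction w with
  | nil => rfl
  | cons ha _ ih =>
    obtain ⟨-, h | h | h⟩ := φ.map_adj ha
    exacts [absurd h (hc _), absurd h (hc _), h.trans ih]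

variable [Fintype W] [DecidableEq W] [DecidableEq ι]

open Finset

variable (c p) in
def blade (i : ι) : Finset W := {w | w ≠ c ∧ p w = i}

lemma mem_blade {w : W} {i : ι} : w ∈ blade c p i ↔ w ≠ c ∧ p w = i := by
  simp [blade]

lemma degree_center : (windmill c p).degree c = Fintype.card W - 1 := by
  rw [← card_neighborFinset_eq_degree, ← card_univ, ← card_erase_of_mem (mem_univ c)]
  congr 1
  ext w
  simp [adj_iff, eq_comm]

lemma degree_of_ne {v : W} (hv : v ≠ c) : (windmill c p).degree v = #(blade c p (p v)) := by
  have hv' : v ∈ blade c p (p v) := mem_blade.2 ⟨hv, rfl⟩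
  have : (windmill c p).neighborFinset v = insert c ((blade c p (p v)).erase v) := by
    ext w
    simp only [mem_neighborFinset, adj_iff, mem_insert, mem_erase, mem_blade]
    grind
  rw [← card_neighborFinset_eq_degree, this, card_insert_of_notMem (by simp [mem_blade]),
    card_erase_of_mem hv', Nat.sub_add_cancel (card_pos.2 ⟨v, hv'⟩)]

lemma two_mul_card_edgeFinset :
    2 * #(windmill c p).edgeFinset
      = (Fintype.card W - 1) + ∑ v ∈ univ.erase c, #(blade c p (p v)) := by
  rw [← sum_degrees_eq_twice_card_edges, ← add_sum_erase _ _ (mem_univ c), degree_center]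
  exact congrArg _ (sum_congr rfl fun v hv => degree_of_ne (ne_of_mem_erase hv))

lemma ncard_le_card_blade {U : Type*} {H : SimpleGraph U} (φ : H →g windmill c p)
    (hφ : Function.Injective φ) (hc : ∀ x, φ x ≠ c) {s : Set U} {x₀ : U}
    (hs : ∀ x ∈ s, H.Reachable x x₀) : s.ncard ≤ #(blade c p (p (φ x₀))) := by
  rw [← Set.ncard_coe_finset]
  refine Set.ncard_le_ncard_of_injOn φ (fun x hx => ?_) hφ.injOn
  exact mem_blade.2 ⟨hc x, label_eq_of_reachable φ hc (hs x hx)⟩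

theorem not_containsCopy {V : Type*} [Finite V] {T : SimpleGraph V} (hT : T.Connected)
    (hp : ∀ i, #(blade c p i) < branchingNumber T) : ¬ ContainsCopy T (windmill c p) := by
  rintro ⟨f, hf⟩
  let φ : T →g windmill c p := ⟨f, fun h => hf h⟩
  by_cases hcf : ∃ v, f v = c
  · obtain ⟨v, hv⟩ := hcf
    let ψ := φ.comp (Embedding.induce {u | u ≠ v}).toHom
    have hψc : ∀ x, ψ x ≠ c := fun x hx => x.2 (f.injective (hx.trans hv.symm))
    have hψ : Function.Injective ψ := f.injective.comp Subtype.val_injective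
    have hlt : largestCompDelVert T v < branchingNumber T := by
      have hpos : 0 < branchingNumber T := (Nat.zero_le _).trans_lt (hp (p c))
      refine Nat.lt_of_le_pred hpos (largestCompDelVert_le fun C => ?_)
      obtain ⟨x₀, rfl⟩ := C.exists_rep
      have hC := ncard_le_card_blade ψ hψ hψc (x₀ := x₀) fun _ hx =>
        ConnectedComponent.exact hx
      exact Nat.le_pred_of_lt (hC.trans_lt (hp _))
    exact hlt.not_ge (Nat.sInf_le (Set.mem_range_self v))
  · push Not at hcf
    obtain ⟨x₀⟩ := hT.nonempty
    have hV := ncard_le_card_blade φ f.injective hcf (s := Set.univ) fun x _ =>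
      hT.preconnected x x₀
    have hm : branchingNumber T ≤ Nat.card V - 1 :=
      (Nat.sInf_le (Set.mem_range_self x₀)).trans (largestCompDelVert_le_card_sub_one x₀)
    have := hp (p (φ x₀))
    rw [Set.ncard_univ] at hV
    omega

end windmill

section Arithmetic

open Finset

lemma Nat.div_eq_iff_mul_le_and_lt {i b g : ℕ} (hb : 0 < b) :
    i / b = g ↔ g * b ≤ i ∧ i < (g + 1) * b := by
  rw [← Nat.le_div_iff_mul_le hb, ← Nat.div_lt_iff_lt_mul hb]
  omega

lemma Fin.card_filter_val_div_eq (n : ℕ) {b : ℕ} (hb : 0 < b) (g : ℕ) :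
    #{i : Fin n | (i : ℕ) / b = g} = min n ((g + 1) * b) - min n (g * b) := by
  have : univ.filter (fun i : Fin n => (i : ℕ) / b = g)
      = univ.filter (fun i : Fin n => (i : ℕ) < (g + 1) * b)
        \ univ.filter (fun i : Fin n => (i : ℕ) < g * b) := by
    ext i
    simp only [mem_filter, mem_univ, true_and, mem_sdiff, Nat.div_eq_iff_mul_le_and_lt hb]
    omega
  rw [this, card_sdiff_of_subset, Fin.card_filter_val_lt, Fin.card_filter_val_lt]
  intro i
  simp only [mem_filter, mem_univ, true_and]
  exact fun hi => hi.trans_le (Nat.mul_le_mul_right b g.le_succ)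

lemma Nat.choose_two_mul_two (b : ℕ) : b.choose 2 * 2 = b * (b - 1) := by
  rw [Nat.choose_two_right]
  exact Nat.div_mul_cancel (Nat.even_mul_pred_self b).two_dvd

end Arithmetic

section Construction

open Finset windmill

variable (N : ℕ) {b : ℕ}

lemma card_blade_div_le (hb : 0 < b) (g : ℕ) :
    #(blade (Fin.last N) (fun i : Fin (N + 1) => (i : ℕ) / b) g) ≤ b := by
  refine (card_le_card fun w hw => ?_).trans
    ((Fin.card_filter_val_div_eq (N + 1) hb g).trans_le ?_)
  · simpa using (mem_blade.1 hw).2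
  · rw [add_mul, one_mul]
    generalize g * b = x
    omega

lemma card_blade_div_eq (hb : 0 < b) {v : Fin (N + 1)} (hv : (v : ℕ) < N / b * b) :
    #(blade (Fin.last N) (fun i : Fin (N + 1) => (i : ℕ) / b) ((v : ℕ) / b)) = b := by
  have hvN : (v : ℕ) / b + 1 ≤ N / b := (Nat.div_lt_iff_lt_mul hb).2 hv
  have hNb : ((v : ℕ) / b + 1) * b ≤ N :=
    (Nat.mul_le_mul_right b hvN).trans (Nat.div_mul_le_self N b)
  have : blade (Fin.last N) (fun i : Fin (N + 1) => (i : ℕ) / b) ((v : ℕ) / b)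
      = univ.filter fun i : Fin (N + 1) => (i : ℕ) / b = (v : ℕ) / b := by
    ext w
    simp only [mem_blade, mem_filter, mem_univ, true_and, and_iff_right_iff_imp]
    rintro hw rfl
    have := ((Nat.div_eq_iff_mul_le_and_lt hb).1 hw).2
    rw [Fin.val_last] at this
    omega
  rw [this, Fin.card_filter_val_div_eq _ hb]
  rw [add_mul, one_mul] at hNb ⊢
  generalize (v : ℕ) / b * b = x at hNb ⊢
  omega

lemma le_ncard_edgeSet_windmill_div (hb : 0 < b) :
    N + N / b * b.choose 2
      ≤ (windmill (Fin.last N) (fun i : Fin (N + 1) => (i : ℕ) / b)).edgeSet.ncard := by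
  set t := N / b
  have htb : t * b ≤ N := Nat.div_mul_le_self N b
  have hblade : ∀ v ∈ univ.erase (Fin.last N), (1 + if (v : ℕ) < t * b then b - 1 else 0)
      ≤ #(blade (Fin.last N) (fun i : Fin (N + 1) => (i : ℕ) / b) ((v : ℕ) / b)) := by
    intro v hv
    split_ifs with hvt
    · rw [card_blade_div_eq N hb hvt]
      omega
    · exact card_pos.2 ⟨v, mem_blade.2 ⟨ne_of_mem_erase hv, rfl⟩⟩
  have hsum : ∑ v ∈ univ.erase (Fin.last N), (1 + if (v : ℕ) < t * b then b - 1 else 0)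
      = N + t * b * (b - 1) := by
    have hfull : (univ.erase (Fin.last N)).filter (fun v : Fin (N + 1) => (v : ℕ) < t * b)
        = univ.filter (fun v : Fin (N + 1) => (v : ℕ) < t * b) := by
      rw [filter_erase, erase_eq_of_notMem (by simp; omega)]
    rw [sum_add_distrib, ← sum_filter, hfull, sum_const, sum_const, smul_eq_mul, smul_eq_mul,
      Fin.card_filter_val_lt, card_erase_of_mem (mem_univ _), card_univ, Fintype.card_fin,
      Nat.add_sub_cancel, min_eq_right (by omega), mul_one]
  have hedges :=
    two_mul_card_edgeFinset (c := Fin.last N) (p := fun i : Fin (N + 1) => (i : ℕ) / b)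
  rw [Fintype.card_fin, Nat.add_sub_cancel] at hedges
  have := sum_le_sum hblade
  have hchoose : t * (b.choose 2 * 2) = t * b * (b - 1) := by
    rw [Nat.choose_two_mul_two]
    ring
  rw [← coe_edgeFinset, Set.ncard_coe_finset]
  linarith

end Construction

lemma not_containsCopy_pathGraph {V : Type*} {T : SimpleGraph V} {v a b c : V}
    (ha : T.Adj v a) (hb : T.Adj v b) (hc : T.Adj v c)
    (hab : a ≠ b) (hac : a ≠ c) (hbc : b ≠ c) (n : ℕ) : ¬ ContainsCopy T (pathGraph n) := by
  rintro ⟨f, hf⟩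
  have := pathGraph_adj.1 (hf ha)
  have := pathGraph_adj.1 (hf hb)
  have := pathGraph_adj.1 (hf hc)
  have := Fin.val_injective.ne (f.injective.ne hab)
  have := Fin.val_injective.ne (f.injective.ne hac)
  have := Fin.val_injective.ne (f.injective.ne hbc)
  omega

theorem exConn_ge_of_branchingNumber_general {V : Type*} [Fintype V] (T : SimpleGraph V) (k : ℕ)
    (hk : 4 ≤ k) (hcard : Fintype.card V = k) (hT : T.IsTree)
    (n : ℕ) :
    n - 1 + (n - 1) / (branchingNumber T - 1) * (branchingNumber T - 1).choose 2
      ≤ exConn n T := by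
  classical
  obtain _ | N := n
  · simp
  rw [Nat.add_sub_cancel]
  rcases le_or_gt (branchingNumber T) 1 with hm | hm
  · have : Nonempty V := hT.connected.nonempty
    obtain ⟨v, hv⟩ := Nat.sInf_mem (Set.range_nonempty fun v => largestCompDelVert T v)
    have hstar : ∀ u ∈ Finset.univ.erase v, T.Adj v u := fun u hu =>
      adj_of_largestCompDelVert_le_one hT.connected.preconnected (hv.trans_le hm)
        (Finset.ne_of_mem_erase hu)
    have hleaves : 2 < (Finset.univ.erase v).card := by
      rw [Finset.card_erase_of_mem (Finset.mem_univ v), Finset.card_univ]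
      omega
    obtain ⟨a, b, c, ha, hb, hc, hab, hac, hbc⟩ := Finset.two_lt_card_iff.1 hleaves
    simpa [Nat.sub_eq_zero_of_le hm] using le_exConn_of_connected (pathGraph_connected N)
      (not_containsCopy_pathGraph (hstar a ha) (hstar b hb) (hstar c hc) hab hac hbc _)
  · refine (le_ncard_edgeSet_windmill_div N (b := branchingNumber T - 1) (by omega)).trans
      (ncard_edgeSet_le_exConn windmill.connected (windmill.not_containsCopy hT.connected
        fun g => ?_))
    exact (card_blade_div_le N (by omega) g).trans_lt (by omega)

/-- Proposition (largest branch construction): if `T` is a tree on `k ≥ 4` vertices which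
is not a path, then for `n ≥ k`,
`ex_c(n,T) ≥ n - 1 + ⌊(n-1)/(m(T)-1)⌋ C(m(T)-1, 2)`. -/
theorem exConn_ge_of_branchingNumber {V : Type*} [Fintype V] (T : SimpleGraph V) (k : ℕ)
    (hk : 4 ≤ k) (hcard : Fintype.card V = k) (hT : T.IsTree) (hnp : ¬ IsPathGraph T)
    (n : ℕ) (hn : k ≤ n) :
    n - 1 + (n - 1) / (branchingNumber T - 1) * (branchingNumber T - 1).choose 2
      ≤ exConn n T :=
  exConn_ge_of_branchingNumber_general T k hk hcard hT n
end

section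
/- Let j ≥ 3 and let T = S_{2,1,…,1} be the spider with one leg of two edges and j−1 legs of one edge each (so T has j+2 vertices and maximum degree Δ(T) = j). Then for every n ≥ |T|, ex_c(n,T) = ⌊n(Δ(T)−1)/2⌋. -/
open SimpleGraph

/-- The broom `B(k,a)`: the spider `S_{a-1,1,…,1}` on `k` vertices, with center `0`,
one leg `0 - 1 - ⋯ - (a-1)` of `a-1` edges, and `k-a` legs of one edge each
(the pendant vertices `a, …, k-1` adjacent to the center `0`). -/
def broom (k a : ℕ) : SimpleGraph (Fin k) :=
  SimpleGraph.fromRel (fun i j =>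
    ((i : ℕ) + 1 = (j : ℕ) ∧ (j : ℕ) < a) ∨ ((i : ℕ) = 0 ∧ a ≤ (j : ℕ)))

/-!
Write `T` for the broom `S_{2,1,…,1}` with center degree `d + 1`. If a connected `T`-free graph
`G` has a vertex `v` of degree `≥ d + 1`, then a path `v - u - w` with `w ∉ N[v]` completes a copy
of `T`, so `N[v]` is closed under adjacency and `v` is universal; as `n ≥ d + 3`, an edge inside
`N(v)` would then complete a copy of `T` as well, so `G` is a star. Otherwise `Δ(G) ≤ d` and the
handshake lemma bounds the number of edges by `⌊n d / 2⌋`.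

Conversely every graph with `Δ(G) ≤ d < Δ(T)` is `T`-free, and the `⌊d/2⌋`-th power of the cycle
`C_n`, together with a matching of size `⌊n/2⌋` when `d` is odd, is such a graph; it is connected
and has `⌊n d / 2⌋` edges.
-/

namespace Nat

open Finset

lemma card_filter_Icc_le (a b x : ℕ) : #{δ ∈ Icc a b | δ ≤ x} = min b x + 1 - a := by
  rw [show ({δ ∈ Icc a b | δ ≤ x} : Finset ℕ) = Icc a (min b x) by ext; simp; omega, card_Icc]

lemma sum_Icc_sub_add_sum_Icc_sub {n : ℕ} : ∀ {r : ℕ}, 2 * r ≤ n →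
    ∑ δ ∈ Icc 1 r, (n - δ) + ∑ δ ∈ Icc (n - r) (n - 1), (n - δ) = n * r
  | 0, _ => by simp; omega
  | r + 1, h => by
    rw [← insert_Icc_right_eq_Icc_add_one (by omega : 1 ≤ r + 1),
      ← insert_Icc_add_one_left_eq_Icc (by omega : n - (r + 1) ≤ n - 1),
      show n - (r + 1) + 1 = n - r by omega, sum_insert (by simp), sum_insert (by simp; omega)]
    have := sum_Icc_sub_add_sum_Icc_sub (n := n) (r := r) (by omega)
    rw [Nat.mul_succ]
    omega

end Nat

namespace SimpleGraph

open Finset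

lemma containsCopy_iff_isContained {α β : Type*} {F : SimpleGraph α} {G : SimpleGraph β} :
    ContainsCopy F G ↔ F ⊑ G := by
  rw [isContained_iff_exists_le_comap]
  rfl

instance (k a : ℕ) : DecidableRel (broom k a).Adj :=
  fun _ _ => inferInstanceAs (Decidable (_ ∧ _))

lemma degree_broom_zero (d : ℕ) : (broom (d + 3) 3).degree 0 = d + 1 := by
  have h02 : (0 : Fin (d + 3)) ≠ 2 := by rw [ne_eq, Fin.ext_iff, Fin.val_zero, Fin.val_two]; omega
  have : (broom (d + 3) 3).neighborFinset 0 = {0, 2}ᶜ := by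
    ext b
    rw [mem_neighborFinset, broom, fromRel_adj]
    simp only [ne_eq, mem_compl, mem_insert, mem_singleton, Fin.ext_iff, Fin.val_zero, Fin.val_two,
      true_and]
    omega
  rw [← card_neighborFinset_eq_degree, this, card_compl, card_pair h02, Fintype.card_fin]
  omega

section BroomFree

variable {V : Type*} {G : SimpleGraph V}

lemma not_broom_isContained_of_degree_le [Fintype V] [DecidableRel G.Adj] {d : ℕ}
    (h : ∀ v, G.degree v ≤ d) : ¬ broom (d + 3) 3 ⊑ G := by
  rintro ⟨f⟩
  have := f.degree_le 0
  rw [degree_broom_zero] at this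
  exact absurd (this.trans (h _)) (by omega)

lemma broom_isContained_of_subset {d : ℕ} {v u w : V} (hvu : G.Adj v u) (huw : G.Adj u w)
    (hwv : w ≠ v) {s : Finset V} (hs : s.card = d) (hsv : ∀ x ∈ s, G.Adj v x) (hu : u ∉ s)
    (hw : w ∉ s) : broom (d + 3) 3 ⊑ G := by
  subst hs
  set g : Fin s.card → V := fun i => s.equivFin.symm i
  have hg : ∀ i, g i ∈ s := fun i => (s.equivFin.symm i).2
  set f : Fin (s.card + 3) → V := Fin.cons v (Fin.cons u (Fin.cons w g))
  have hf : Function.Injective f := by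
    simp only [f, Fin.cons_injective_iff, Fin.range_cons, Set.mem_insert_iff, Set.mem_range,
      not_or, not_exists]
    refine ⟨⟨hvu.ne, hwv.symm, fun i h => (hsv _ (hg i)).ne h.symm⟩,
      ⟨huw.ne, fun i h => hu (h ▸ hg i)⟩, fun i h => hw (h ▸ hg i), ?_⟩
    exact Subtype.val_injective.comp s.equivFin.symm.injective
  have hpath : ∀ a b : Fin (s.card + 3),
      ((a : ℕ) + 1 = b ∧ (b : ℕ) < 3) ∨ ((a : ℕ) = 0 ∧ 3 ≤ (b : ℕ)) → G.Adj (f a) (f b) := by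
    rintro a b (⟨hab, hb⟩ | ⟨ha, hb⟩)
    · obtain ⟨ha, hb⟩ | ⟨ha, hb⟩ : (a : ℕ) = 0 ∧ (b : ℕ) = 1 ∨ (a : ℕ) = 1 ∧ (b : ℕ) = 2 := by
        omega
      · rw [show a = 0 from Fin.ext ha, show b = Fin.succ 0 from Fin.ext (by simp [hb])]
        simpa [f] using hvu
      · rw [show a = Fin.succ 0 from Fin.ext (by simp [ha]),
          show b = Fin.succ (Fin.succ 0) from
            Fin.ext (by simp only [Fin.val_succ, Fin.val_zero, hb])]
        simpa only [f, Fin.cons_succ, Fin.cons_zero] using huw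
    · obtain ⟨i, rfl⟩ : ∃ i : Fin s.card, b = i.succ.succ.succ :=
        ⟨⟨b - 3, by omega⟩, Fin.ext (by simp; omega)⟩
      rw [show a = 0 from Fin.ext ha]
      simpa [f] using hsv _ (hg i)
  refine ⟨⟨⟨f, fun {a b} hab => ?_⟩, hf⟩⟩
  rw [broom, fromRel_adj] at hab
  exact hab.2.elim (hpath a b) fun h => (hpath b a h).symm

lemma broom_isContained_of_le_card [Fintype V] [DecidableEq V] [DecidableRel G.Adj] {d : ℕ}
    {v u w : V} (hvu : G.Adj v u) (huw : G.Adj u w) (hwv : w ≠ v)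
    (hd : d ≤ #(((G.neighborFinset v).erase u).erase w)) : broom (d + 3) 3 ⊑ G := by
  obtain ⟨s, hs, hcard⟩ := exists_subset_card_eq hd
  refine broom_isContained_of_subset hvu huw hwv hcard (fun x hx => ?_) (fun h => ?_)
    (fun h => ?_)
  · exact (mem_neighborFinset _ _ _).1 (mem_of_mem_erase (mem_of_mem_erase (hs hx)))
  · simpa using hs h
  · simpa using hs h

lemma Reachable.mem_of_adj_closed {s : Set V} (hs : ∀ ⦃u w⦄, u ∈ s → G.Adj u w → w ∈ s)
    {a b : V} (h : G.Reachable a b) (ha : a ∈ s) : b ∈ s := by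
  obtain ⟨p⟩ := h
  induction p with
  | nil => exact ha
  | cons hadj _ ih => exact ih (hs ha hadj)

lemma Connected.isUniversal_of_adj_adj (hc : G.Connected) {v : V}
    (h : ∀ ⦃u w⦄, G.Adj v u → G.Adj u w → w ≠ v → G.Adj v w) : G.IsUniversal v := by
  intro x hx
  refine ((hc v x).mem_of_adj_closed (s := {x | x = v ∨ G.Adj v x}) ?_ (Or.inl rfl)).resolve_left
    hx.symm
  rintro u w (rfl | hu) huw
  · exact Or.inr huw
  · by_cases hw : w = v
    · exact Or.inl hw
    · exact Or.inr (h hu huw hw)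

lemma le_starGraph_of_broom_free [Fintype V] [DecidableEq V] [DecidableRel G.Adj] {d : ℕ}
    (hc : G.Connected) (hfree : ¬ broom (d + 3) 3 ⊑ G) (hV : d + 3 ≤ Fintype.card V) {v : V}
    (hv : d + 1 ≤ G.degree v) : G ≤ starGraph v := by
  have huniv : G.IsUniversal v := hc.isUniversal_of_adj_adj fun u w hvu huw hwv => by
    by_contra hvw
    refine hfree (broom_isContained_of_le_card hvu huw hwv ?_)
    rw [erase_eq_of_notMem (by simp [hvw]), card_erase_of_mem (by simpa using hvu),
      card_neighborFinset_eq_degree]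
    omega
  have hdeg : G.degree v = Fintype.card V - 1 := (G.degree_eq_card_sub_one v).2 huniv
  intro a b hab
  refine (starGraph_adj).2 ⟨hab.ne, ?_⟩
  by_contra! h
  refine hfree (broom_isContained_of_le_card (huniv (Ne.symm h.1)) hab h.2 ?_)
  rw [card_erase_of_mem (by simpa using ⟨hab.ne', huniv (Ne.symm h.2)⟩),
    card_erase_of_mem (by simpa using huniv (Ne.symm h.1)), card_neighborFinset_eq_degree]
  omega

lemma card_edgeFinset_le_of_broom_free [Fintype V] [DecidableEq V] [DecidableRel G.Adj] {d : ℕ}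
    (hd : 2 ≤ d) (hV : d + 3 ≤ Fintype.card V) (hc : G.Connected)
    (hfree : ¬ broom (d + 3) 3 ⊑ G) : #G.edgeFinset ≤ Fintype.card V * d / 2 := by
  by_cases hdeg : ∀ v, G.degree v ≤ d
  · have hsum : ∑ v, G.degree v ≤ Fintype.card V * d :=
      (sum_le_sum fun v _ => hdeg v).trans (by simp)
    have := G.sum_degrees_eq_twice_card_edges
    omega
  · obtain ⟨v, hv⟩ := not_forall.1 hdeg
    have hstar :=
      card_le_card (edgeFinset_mono (le_starGraph_of_broom_free hc hfree hV (not_le.1 hv)))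
    have htree := (isTree_starGraph v).card_edgeFinset
    have : 2 * Fintype.card V ≤ Fintype.card V * d := by nlinarith
    omega

end BroomFree

def distanceGraph (n : ℕ) (A : Finset ℕ) : SimpleGraph (Fin n) where
  Adj i k := (i < k ∧ (k : ℕ) - i ∈ A) ∨ (k < i ∧ (i : ℕ) - k ∈ A)
  symm := ⟨fun _ _ => Or.symm⟩
  loopless := ⟨fun _ h => by simp at h⟩

instance (n : ℕ) (A : Finset ℕ) : DecidableRel (distanceGraph n A).Adj :=
  fun _ _ => by dsimp only [distanceGraph]; infer_instance

section DistanceGraph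

variable {n : ℕ} {A : Finset ℕ}

lemma distanceGraph_connected (hn : n ≠ 0) (hA : 1 ∈ A) : (distanceGraph n A).Connected where
  preconnected := (pathGraph_preconnected n).mono fun i k hik => by
    rw [pathGraph_adj] at hik
    rcases hik with h | h
    · exact Or.inl ⟨Fin.lt_def.2 (by omega), by rwa [← h, Nat.add_sub_cancel_left]⟩
    · exact Or.inr ⟨Fin.lt_def.2 (by omega), by rwa [← h, Nat.add_sub_cancel_left]⟩
  nonempty := ⟨⟨0, Nat.pos_of_ne_zero hn⟩⟩

lemma degree_distanceGraph_le (i : Fin n) :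
    (distanceGraph n A).degree i ≤ #{δ ∈ A | δ ≤ (i : ℕ)} + #{δ ∈ A | i + δ < n} := by
  rw [← card_neighborFinset_eq_degree, ← card_map Fin.valEmbedding]
  calc _ ≤ #({δ ∈ A | δ ≤ (i : ℕ)}.image ((i : ℕ) - ·) ∪
        {δ ∈ A | i + δ < n}.image ((i : ℕ) + ·)) :=
        card_le_card ?_
    _ ≤ _ := (card_union_le _ _).trans (add_le_add card_image_le card_image_le)
  intro x hx
  simp only [mem_map, mem_neighborFinset, Fin.valEmbedding_apply] at hx
  obtain ⟨k, hk, rfl⟩ := hx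
  simp only [mem_union, mem_image, mem_filter]
  rcases hk with ⟨hlt, hA⟩ | ⟨hlt, hA⟩
  · exact Or.inr ⟨k - i, ⟨hA, by omega⟩, by omega⟩
  · exact Or.inl ⟨i - k, ⟨hA, by omega⟩, by omega⟩

lemma card_edgeFinset_distanceGraph (hA : 0 ∉ A) :
    #(distanceGraph n A).edgeFinset = ∑ δ ∈ A, (n - δ) := by
  have hbounds : ∀ p ∈ A.sigma fun δ => range (n - δ), p.2 + p.1 < n ∧ 0 < p.1 := by
    intro p hp
    rw [mem_sigma, mem_range] at hp
    exact ⟨by omega, Nat.pos_of_ne_zero fun h => hA (h ▸ hp.1)⟩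
  rw [show ∑ δ ∈ A, (n - δ) = #(A.sigma fun δ => range (n - δ)) by simp [card_sigma]]
  refine (card_bij (fun p hp => s(⟨p.2, by have := hbounds p hp; omega⟩,
    ⟨p.2 + p.1, (hbounds p hp).1⟩)) ?_ ?_ ?_).symm
  · intro p hp
    have := hbounds p hp
    rw [mem_edgeFinset, mem_edgeSet]
    refine Or.inl ⟨Fin.lt_def.2 (by simp; omega), ?_⟩
    simpa using (mem_sigma.1 hp).1
  · rintro ⟨δ, m⟩ hp ⟨δ', m'⟩ hq h
    have := hbounds _ hp
    have := hbounds _ hq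
    simp only [Sym2.eq_iff, Fin.mk.injEq] at h this
    obtain ⟨rfl, rfl⟩ : δ = δ' ∧ m = m' := by omega
    rfl
  · intro e he
    induction e using Sym2.ind with
    | _ a b =>
      rw [mem_edgeFinset, mem_edgeSet] at he
      rcases he with ⟨hab, hA⟩ | ⟨hab, hA⟩ <;> rw [Fin.lt_def] at hab
      · refine ⟨⟨b - a, a⟩, by simp [hA]; omega, ?_⟩
        rw [Sym2.eq_iff]
        exact Or.inl ⟨rfl, Fin.ext (by simp; omega)⟩
      · refine ⟨⟨a - b, b⟩, by simp [hA]; omega, ?_⟩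
        rw [Sym2.eq_iff]
        exact Or.inr ⟨rfl, Fin.ext (by simp; omega)⟩

end DistanceGraph

/-- The distances `n - ⌊d/2⌋, …, n - 1` are the wrap-around edges of the `⌊d/2⌋`-th power of
`C_n`; for odd `d` the distance `⌈n/2⌉` adds a matching of size `⌊n/2⌋`. -/
def extremalDistances (n d : ℕ) : Finset ℕ :=
  Icc 1 (d / 2) ∪ Icc (n - d / 2) (n - 1) ∪ if Odd d then {(n + 1) / 2} else ∅

lemma card_filter_extremalDistances_le {n d x y : ℕ} (hn : d + 3 ≤ n) (hxy : x + y + 1 = n) :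
    #{δ ∈ extremalDistances n d | δ ≤ x} + #{δ ∈ extremalDistances n d | δ ≤ y} ≤ d := by
  have hband : ∀ z, #({δ ∈ Icc 1 (d / 2) | δ ≤ z} ∪ {δ ∈ Icc (n - d / 2) (n - 1) | δ ≤ z}) ≤
      min (d / 2) z + (min (n - 1) z + 1 - (n - d / 2)) := fun z => by
    have := card_union_le {δ ∈ Icc 1 (d / 2) | δ ≤ z} {δ ∈ Icc (n - d / 2) (n - 1) | δ ≤ z}
    rwa [Nat.card_filter_Icc_le, Nat.card_filter_Icc_le] at this
  have hx := hband x
  have hy := hband y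
  simp only [extremalDistances, filter_union]
  split_ifs with hd
  · rw [Nat.odd_iff] at hd
    refine (add_le_add (card_union_le _ _) (card_union_le _ _)).trans ?_
    rw [filter_singleton, filter_singleton]
    split_ifs <;> simp only [card_singleton, card_empty] <;> omega
  · rw [Nat.not_odd_iff] at hd
    simp only [filter_empty, union_empty]
    omega

lemma sum_extremalDistances {n d : ℕ} (hn : d + 3 ≤ n) :
    ∑ δ ∈ extremalDistances n d, (n - δ) = n * d / 2 := by
  have hdisj : Disjoint (Icc 1 (d / 2)) (Icc (n - d / 2) (n - 1)) :=
    Finset.disjoint_left.2 fun x hx hx' => by simp only [mem_Icc] at hx hx'; omega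
  rw [extremalDistances, sum_union, sum_union hdisj,
    Nat.sum_Icc_sub_add_sum_Icc_sub (by omega)]
  · obtain ⟨r, rfl | rfl⟩ := Nat.even_or_odd' d
    · rw [if_neg (by simp [Nat.not_odd_iff_even]), sum_empty, Nat.mul_div_cancel_left r two_pos,
        mul_left_comm, Nat.mul_div_cancel_left _ two_pos, add_zero]
    · rw [if_pos (odd_two_mul_add_one r), sum_singleton,
        show (2 * r + 1) / 2 = r by omega, show n * (2 * r + 1) = 2 * (n * r) + n by ring]
      omega
  · split_ifs
    · exact disjoint_singleton_right.2 (by simp; omega)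
    · exact disjoint_empty_right _

lemma degree_distanceGraph_extremalDistances_le {n d : ℕ} (hn : d + 3 ≤ n) (i : Fin n) :
    (distanceGraph n (extremalDistances n d)).degree i ≤ d := by
  have hupper : {δ ∈ extremalDistances n d | i + δ < n} =
      {δ ∈ extremalDistances n d | δ ≤ n - 1 - i} := filter_congr fun δ _ => by omega
  refine (degree_distanceGraph_le i).trans ?_
  rw [hupper]
  exact card_filter_extremalDistances_le hn (by omega)

lemma distanceGraph_extremalDistances_connected {n d : ℕ} (hd : 2 ≤ d) (hn : d + 3 ≤ n) :
    (distanceGraph n (extremalDistances n d)).Connected :=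
  distanceGraph_connected (by omega) (by simp [extremalDistances]; omega)

lemma card_edgeFinset_distanceGraph_extremalDistances {n d : ℕ} (hn : d + 3 ≤ n) :
    #(distanceGraph n (extremalDistances n d)).edgeFinset = n * d / 2 := by
  rw [card_edgeFinset_distanceGraph (by unfold extremalDistances; split_ifs <;> simp <;> omega),
    sum_extremalDistances hn]

end SimpleGraph

/-- Theorem: for `j ≥ 3`, the spider `T = S_{2,1,…,1}` with one leg of two edges and
`j-1` legs of one edge (which is the broom `B(j+2,3)`, on `j+2` vertices, with maximum
degree `Δ(T) = j`) satisfies `ex_c(n,T) = ⌊n(Δ(T)-1)/2⌋` for every `n ≥ |T| = j+2`. -/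
theorem exConn_spider_two_one (j : ℕ) (hj : 3 ≤ j) (n : ℕ) (hn : j + 2 ≤ n) :
    exConn n (broom (j + 2) 3) = n * (j - 1) / 2 := by
  obtain ⟨d, rfl⟩ : ∃ d, j = d + 1 := ⟨j - 1, by omega⟩
  rw [Nat.add_sub_cancel]
  refine IsGreatest.csSup_eq ⟨⟨distanceGraph n (extremalDistances n d),
    distanceGraph_extremalDistances_connected (by omega) (by omega), ?_, ?_⟩, ?_⟩
  · rw [containsCopy_iff_isContained]
    exact not_broom_isContained_of_degree_le (degree_distanceGraph_extremalDistances_le (by omega))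
  · rw [← coe_edgeFinset, Set.ncard_coe_finset,
      card_edgeFinset_distanceGraph_extremalDistances (by omega)]
  · rintro m ⟨G, hc, hfree, rfl⟩
    classical
    rw [containsCopy_iff_isContained] at hfree
    rw [← coe_edgeFinset, Set.ncard_coe_finset]
    simpa only [Fintype.card_fin] using
      card_edgeFinset_le_of_broom_free (by omega) (by rw [Fintype.card_fin]; omega) hc hfree
end
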